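/- Let k ∈ ℕ, N ∈ ℕ, ε > 0, and let R > 0 be such that |tanh^{(m)}| is monotonically decreasing on [R, ∞) for every 1 ≤ m ≤ k. Set α = N · max{R, ln((2k)^{k+1} (Nk)^k / (e^k ε))}. Then α/N ≥ R, 1 − tanh(α/N) ≤ ε, and α^m |tanh^{(m)}(α/N)| ≤ ε for every 1 ≤ m ≤ k. -/

import Mathlib

open Polynomial Real
open scoped Nat

/-! Inductively, `tanh^{(n+1)} = (1 - tanh²) · Qₙ(tanh)` for a polynomial `Qₙ` of degree at most `n`
whose coefficients are at most `2ⁿ (n+1)!` in absolute value. As `|tanh| < 1` and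
`1 - tanh² = sech² ≤ 4 e^{-2x}`, this gives `|tanh^{(m)}(x)| ≤ 2^{m+1} m · m! · e^{-2x}`. Together with
`x^m ≤ m^m e^{x-m}` (from `1 + t ≤ eᵗ`), `(N x)^m |tanh^{(m)}(x)| ≤ c e^{-k} e^{-x}` for every
`1 ≤ m ≤ k`, where `c = (2k)^{k+1} (Nk)^k`; and `x ≥ ln(c / (e^k ε))` makes the right side at most `ε`.
Finally `1 - tanh x ≤ 2 e^{-2x}`, and for `ε < 1` the same decay estimate bounds this by `ε² ≤ ε`,
because `(c e^{-k})² ≥ (4/e)² ≥ 2`. -/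

namespace Real

lemma hasDerivAt_tanh (x : ℝ) : HasDerivAt tanh (1 - tanh x ^ 2) x := by
  have h := (hasDerivAt_sinh x).div (hasDerivAt_cosh x) (cosh_pos x).ne'
  rw [show tanh = sinh / cosh from funext tanh_eq_sinh_div_cosh]
  refine h.congr_deriv ?_
  rw [Pi.div_apply]
  field_simp

lemma tanh_nonneg {x : ℝ} (hx : 0 ≤ x) : 0 ≤ tanh x := by
  rw [tanh_eq_sinh_div_cosh]
  exact div_nonneg (sinh_nonneg_iff.mpr hx) (cosh_pos x).le

lemma one_sub_tanh_le (x : ℝ) : 1 - tanh x ≤ 2 * exp (-x) ^ 2 := by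
  have hprod : exp x * exp (-x) = 1 := by rw [← exp_add, add_neg_cancel, exp_zero]
  have := exp_pos x
  have := exp_pos (-x)
  rw [tanh_eq, one_sub_div (by positivity), div_le_iff₀ (by positivity)]
  nlinarith

lemma one_sub_tanh_sq_le (x : ℝ) : 1 - tanh x ^ 2 ≤ 4 * exp (-x) ^ 2 := by
  have hprod : exp x * exp (-x) = 1 := by rw [← exp_add, add_neg_cancel, exp_zero]
  have := exp_pos x
  have := exp_pos (-x)
  rw [tanh_eq, div_pow, one_sub_div (by positivity), div_le_iff₀ (by positivity)]
  nlinarith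

lemma one_sub_tanh_sq_nonneg (x : ℝ) : 0 ≤ 1 - tanh x ^ 2 := by
  linarith [tanh_sq_lt_one x]

end Real

namespace Polynomial

variable {R : Type*} [CommRing R] [LinearOrder R] [IsStrictOrderedRing R]

lemma abs_eval_le_of_abs_coeff_le {p : R[X]} {d : ℕ} {B t : R} (hp : p.natDegree ≤ d)
    (hB : ∀ i, |p.coeff i| ≤ B) (ht : |t| ≤ 1) : |p.eval t| ≤ (d + 1) * B := by
  rw [eval_eq_sum_range' (Nat.lt_succ_of_le hp)]
  calc |∑ i ∈ Finset.range (d + 1), p.coeff i * t ^ i|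
      ≤ ∑ i ∈ Finset.range (d + 1), |p.coeff i * t ^ i| := Finset.abs_sum_le_sum_abs _ _
    _ ≤ ∑ _i ∈ Finset.range (d + 1), B := by
        refine Finset.sum_le_sum fun i _ => ?_
        rw [abs_mul, abs_pow]
        exact (mul_le_of_le_one_right (abs_nonneg _) (pow_le_one₀ (abs_nonneg t) ht)).trans (hB i)
    _ = (d + 1) * B := by simp

lemma abs_coeff_derivative_le {p : R[X]} {d : ℕ} {B : R} (hp : p.natDegree ≤ d)
    (hB : ∀ i, |p.coeff i| ≤ B) (i : ℕ) : |(derivative p).coeff i| ≤ d * B := by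
  have hB0 : 0 ≤ B := (abs_nonneg _).trans (hB 0)
  rw [coeff_derivative]
  rcases le_or_gt d i with hdi | hid
  · rw [coeff_eq_zero_of_natDegree_lt (by omega), zero_mul, abs_zero]
    positivity
  · rw [abs_mul, mul_comm]
    have hi : ((i : R) + 1) ≤ d := by exact_mod_cast hid
    rw [abs_of_nonneg (by positivity)]
    exact mul_le_mul hi (hB _) (abs_nonneg _) (by positivity)

lemma abs_coeff_one_sub_X_sq_mul_le {p : R[X]} {B : R} (hB : ∀ i, |p.coeff i| ≤ B) (i : ℕ) :
    |((1 - X ^ 2) * p).coeff i| ≤ 2 * B := by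
  have hB0 : 0 ≤ B := (abs_nonneg _).trans (hB 0)
  rw [sub_mul, one_mul, coeff_sub, coeff_X_pow_mul']
  split_ifs
  · linarith [abs_sub (p.coeff i) (p.coeff (i - 2)), hB i, hB (i - 2)]
  · rw [sub_zero]; linarith [hB i]

end Polynomial

noncomputable def tanhDerivPoly : ℕ → ℝ[X]
  | 0 => 1
  | n + 1 => derivative ((1 - X ^ 2) * tanhDerivPoly n)

lemma iteratedDeriv_succ_tanh (n : ℕ) :
    iteratedDeriv (n + 1) tanh = fun x => ((1 - X ^ 2) * tanhDerivPoly n).eval (tanh x) := by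
  induction n with
  | zero =>
    funext x
    simp [tanhDerivPoly, (hasDerivAt_tanh x).deriv]
  | succ n ih =>
    funext x
    rw [iteratedDeriv_succ, ih]
    refine ((((1 - X ^ 2) * tanhDerivPoly n).hasDerivAt (tanh x)).comp x
      (hasDerivAt_tanh x)).deriv.trans ?_
    rw [tanhDerivPoly, eval_mul, mul_comm]
    simp

lemma natDegree_tanhDerivPoly_le (n : ℕ) : (tanhDerivPoly n).natDegree ≤ n := by
  induction n with
  | zero => simp [tanhDerivPoly]
  | succ n ih =>
    have h : ((1 - X ^ 2 : ℝ[X]) * tanhDerivPoly n).natDegree ≤ n + 2 :=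
      natDegree_mul_le_of_le (by compute_degree!) ih |>.trans (by omega)
    exact (natDegree_derivative_le _).trans (by omega)

lemma abs_coeff_tanhDerivPoly_le (n i : ℕ) :
    |(tanhDerivPoly n).coeff i| ≤ 2 ^ n * (n + 1)! := by
  induction n generalizing i with
  | zero => by_cases hi : i = 0 <;> simp [tanhDerivPoly, coeff_one, hi]
  | succ n ih =>
    have hdeg : ((1 - X ^ 2 : ℝ[X]) * tanhDerivPoly n).natDegree ≤ n + 2 :=
      natDegree_mul_le_of_le (by compute_degree!) (natDegree_tanhDerivPoly_le n) |>.trans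
        (by omega)
    calc |(tanhDerivPoly (n + 1)).coeff i| ≤ ((n + 2 : ℕ) : ℝ) * (2 * (2 ^ n * (n + 1)!)) :=
          abs_coeff_derivative_le hdeg (abs_coeff_one_sub_X_sq_mul_le ih) i
      _ = 2 ^ (n + 1) * (n + 1 + 1)! := by push_cast [Nat.factorial_succ]; ring

lemma abs_iteratedDeriv_tanh_le {m : ℕ} (hm : 1 ≤ m) (x : ℝ) :
    |iteratedDeriv m tanh x| ≤ 2 ^ (m + 1) * m * m ! * exp (-x) ^ 2 := by
  obtain ⟨n, rfl⟩ : ∃ n, m = n + 1 := ⟨m - 1, by omega⟩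
  have hpoly : |(tanhDerivPoly n).eval (tanh x)| ≤ (n + 1) * (2 ^ n * (n + 1)!) :=
    abs_eval_le_of_abs_coeff_le (natDegree_tanhDerivPoly_le n) (abs_coeff_tanhDerivPoly_le n)
      (abs_tanh_lt_one x).le
  simp only [iteratedDeriv_succ_tanh, eval_mul, eval_sub, eval_one, eval_pow, eval_X, abs_mul]
  rw [abs_of_nonneg (one_sub_tanh_sq_nonneg x)]
  calc (1 - tanh x ^ 2) * |(tanhDerivPoly n).eval (tanh x)|
      ≤ 4 * exp (-x) ^ 2 * ((n + 1) * (2 ^ n * (n + 1)!)) :=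
        mul_le_mul (one_sub_tanh_sq_le x) hpoly (abs_nonneg _) (by positivity)
    _ = _ := by push_cast; ring

lemma pow_le_pow_mul_exp_sub (n : ℕ) {x : ℝ} (hx : 0 ≤ x) : x ^ n ≤ n ^ n * exp (x - n) := by
  rcases Nat.eq_zero_or_pos n with rfl | hn
  · simpa using one_le_exp hx
  have hn' : (0 : ℝ) < n := by exact_mod_cast hn
  have h : x ≤ n * exp (x / n - 1) := by
    have := add_one_le_exp (x / n - 1)
    rwa [sub_add_cancel, div_le_iff₀' hn'] at this
  calc x ^ n ≤ (n * exp (x / n - 1)) ^ n := pow_le_pow_left₀ hx h n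
    _ = n ^ n * exp (x - n) := by
      rw [mul_pow, ← exp_nat_mul]
      field_simp

lemma pow_mul_exp_sub_le {m k : ℕ} (hm : 1 ≤ m) (hmk : m ≤ k) :
    (m : ℝ) ^ (2 * m + 1) * exp (k - m) ≤ (k : ℝ) ^ (2 * k + 1) := by
  have hm1 : (1 : ℝ) ≤ m := by exact_mod_cast hm
  have hmk' : (m : ℝ) ≤ k := by exact_mod_cast hmk
  have h : (m : ℝ) ^ k * exp (k - m) ≤ k ^ k := by
    calc (m : ℝ) ^ k * exp (k - m) ≤ k ^ k * exp (m - k) * exp (k - m) := by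
          gcongr; exact pow_le_pow_mul_exp_sub k m.cast_nonneg
      _ = k ^ k := by rw [mul_assoc, ← exp_add]; simp
  calc (m : ℝ) ^ (2 * m + 1) * exp (k - m) ≤ m ^ (2 * k + 1) * exp (k - m) := by
        gcongr
    _ = m ^ (k + 1) * (m ^ k * exp (k - m)) := by ring
    _ ≤ k ^ (k + 1) * k ^ k := by gcongr
    _ = k ^ (2 * k + 1) := by ring

lemma two_pow_mul_factorial_mul_exp_le {m k : ℕ} (N : ℕ) (hm : 1 ≤ m) (hmk : m ≤ k)
    (hN : 1 ≤ N) :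
    2 ^ (m + 1) * m * m ! * ((N : ℝ) * m) ^ m * exp (k - m) ≤
      (2 * (k : ℝ)) ^ (k + 1) * ((N : ℝ) * k) ^ k := by
  have hN1 : (1 : ℝ) ≤ N := by exact_mod_cast hN
  have hfact : (m : ℝ) * m ! * m ^ m ≤ m ^ (2 * m + 1) := by
    calc (m : ℝ) * m ! * m ^ m ≤ m * m ^ m * m ^ m := by
          gcongr; exact_mod_cast Nat.factorial_le_pow m
      _ = m ^ (2 * m + 1) := by ring
  calc 2 ^ (m + 1) * m * m ! * ((N : ℝ) * m) ^ m * exp (k - m)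
      = 2 ^ (m + 1) * (N : ℝ) ^ m * (m * m ! * m ^ m * exp (k - m)) := by ring
    _ ≤ 2 ^ (k + 1) * (N : ℝ) ^ k * (m ^ (2 * m + 1) * exp (k - m)) := by
        gcongr
        norm_num
    _ ≤ 2 ^ (k + 1) * (N : ℝ) ^ k * k ^ (2 * k + 1) := by
        gcongr; exact pow_mul_exp_sub_le hm hmk
    _ = (2 * (k : ℝ)) ^ (k + 1) * ((N : ℝ) * k) ^ k := by ring

lemma pow_mul_abs_iteratedDeriv_tanh_le {m : ℕ} (hm : 1 ≤ m) {x : ℝ} (hx : 0 ≤ x) :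
    x ^ m * |iteratedDeriv m tanh x| ≤ 2 ^ (m + 1) * m * m ! * m ^ m * exp (-m) * exp (-x) := by
  calc x ^ m * |iteratedDeriv m tanh x|
      ≤ (m ^ m * exp (x - m)) * (2 ^ (m + 1) * m * m ! * exp (-x) ^ 2) := by
        gcongr
        · exact pow_le_pow_mul_exp_sub m hx
        · exact abs_iteratedDeriv_tanh_le hm x
    _ = 2 ^ (m + 1) * m * m ! * m ^ m * (exp (x - m) * exp (-x) ^ 2) := by ring
    _ = 2 ^ (m + 1) * m * m ! * m ^ m * (exp (-m) * exp (-x)) := by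
        rw [sq, ← exp_add, ← exp_add, ← exp_add]
        ring_nf
    _ = 2 ^ (m + 1) * m * m ! * m ^ m * exp (-m) * exp (-x) := by ring

lemma one_sub_tanh_le_of_mul_exp_neg_le {a x ε : ℝ} (hx : 0 ≤ x) (ha : 0 ≤ a) (ha2 : 2 ≤ a ^ 2)
    (h : a * exp (-x) ≤ ε) : 1 - tanh x ≤ ε := by
  rcases le_or_gt 1 ε with hε | hε
  · linarith [tanh_nonneg hx]
  have hε0 : 0 ≤ ε := (mul_nonneg ha (exp_pos _).le).trans h
  calc 1 - tanh x ≤ 2 * exp (-x) ^ 2 := one_sub_tanh_le x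
    _ ≤ a ^ 2 * exp (-x) ^ 2 := by gcongr
    _ = (a * exp (-x)) ^ 2 := by ring
    _ ≤ ε ^ 2 := by gcongr
    _ ≤ ε := by nlinarith

lemma scaled_pow_mul_abs_iteratedDeriv_tanh_le {m k N : ℕ} (hm : 1 ≤ m) (hmk : m ≤ k)
    (hN : 1 ≤ N) {x : ℝ} (hx : 0 ≤ x) :
    ((N : ℝ) * x) ^ m * |iteratedDeriv m tanh x| ≤
      (2 * (k : ℝ)) ^ (k + 1) * ((N : ℝ) * k) ^ k * exp (-k) * exp (-x) := by
  calc ((N : ℝ) * x) ^ m * |iteratedDeriv m tanh x|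
      = (N : ℝ) ^ m * (x ^ m * |iteratedDeriv m tanh x|) := by ring
    _ ≤ (N : ℝ) ^ m * (2 ^ (m + 1) * m * m ! * m ^ m * exp (-m) * exp (-x)) := by
        gcongr ?_ * ?_
        exact pow_mul_abs_iteratedDeriv_tanh_le hm hx
    _ = 2 ^ (m + 1) * m * m ! * ((N : ℝ) * m) ^ m * exp (k - m) * exp (-k) * exp (-x) := by
        rw [mul_assoc _ (exp _) (exp (-(k : ℝ))), ← exp_add, show (k : ℝ) - m + -k = -m by ring]
        ring
    _ ≤ (2 * (k : ℝ)) ^ (k + 1) * ((N : ℝ) * k) ^ k * exp (-k) * exp (-x) := by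
        gcongr ?_ * _ * _
        exact two_pow_mul_factorial_mul_exp_le N hm hmk hN

lemma four_mul_exp_neg_one_le {k N : ℕ} (hk : 1 ≤ k) (hN : 1 ≤ N) :
    4 * exp (-1) ≤ (2 * (k : ℝ)) ^ (k + 1) * ((N : ℝ) * k) ^ k * exp (-k) := by
  have h := two_pow_mul_factorial_mul_exp_le N le_rfl hk hN
  norm_num at h
  calc 4 * exp (-1) = 4 * exp ((k : ℝ) - 1) * exp (-k) := by
        rw [mul_assoc, ← exp_add]; ring_nf
    _ ≤ 4 * N * exp ((k : ℝ) - 1) * exp (-k) := by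
        gcongr; exact le_mul_of_one_le_right (by norm_num) (by exact_mod_cast hN)
    _ ≤ (2 * (k : ℝ)) ^ (k + 1) * ((N : ℝ) * k) ^ k * exp (-k) := by gcongr

lemma mul_exp_neg_mul_exp_neg_le {c s ε L : ℝ} (hc : 0 < c) (hε : 0 < ε)
    (hL : log (c / (exp s * ε)) ≤ L) : c * exp (-s) * exp (-L) ≤ ε := by
  have hcL : c ≤ exp L * (exp s * ε) :=
    (div_le_iff₀ (by positivity)).mp ((log_le_iff_le_exp (by positivity)).mp hL)
  calc c * exp (-s) * exp (-L) ≤ exp L * (exp s * ε) * exp (-s) * exp (-L) := by gcongr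
    _ = ε := by rw [exp_neg, exp_neg]; field_simp

theorem tanh_partition_alpha_choice_general (k N : ℕ) (hk : 1 ≤ k) (hN : 1 ≤ N)
    (ε R : ℝ) (hε : 0 < ε) (hR : 0 < R) :
    R ≤ ((N : ℝ) * max R (Real.log ((2 * (k : ℝ)) ^ (k + 1) * ((N : ℝ) * k) ^ k /
        (Real.exp k * ε)))) / N ∧
    1 - Real.tanh (((N : ℝ) * max R (Real.log ((2 * (k : ℝ)) ^ (k + 1) * ((N : ℝ) * k) ^ k /
        (Real.exp k * ε)))) / N) ≤ ε ∧
    ∀ m : ℕ, 1 ≤ m → m ≤ k →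
      ((N : ℝ) * max R (Real.log ((2 * (k : ℝ)) ^ (k + 1) * ((N : ℝ) * k) ^ k /
          (Real.exp k * ε)))) ^ m *
        |iteratedDeriv m Real.tanh
          (((N : ℝ) * max R (Real.log ((2 * (k : ℝ)) ^ (k + 1) * ((N : ℝ) * k) ^ k /
            (Real.exp k * ε)))) / N)| ≤ ε := by
  set c : ℝ := (2 * (k : ℝ)) ^ (k + 1) * ((N : ℝ) * k) ^ k
  set L := max R (log (c / (exp k * ε)))
  have hk0 : (0 : ℝ) < k := by exact_mod_cast hk
  have hN0 : (0 : ℝ) < N := by exact_mod_cast hN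
  rw [mul_div_cancel_left₀ L hN0.ne']
  have hRL : R ≤ L := le_max_left _ _
  have hL0 : 0 ≤ L := hR.le.trans hRL
  have hdecay : c * exp (-k) * exp (-L) ≤ ε :=
    mul_exp_neg_mul_exp_neg_le (by positivity) hε (le_max_right _ _)
  have ha : 4 * exp (-1) ≤ c * exp (-k) := four_mul_exp_neg_one_le hk hN
  refine ⟨hRL, one_sub_tanh_le_of_mul_exp_neg_le hL0 (by positivity)
    (by nlinarith [exp_neg_one_gt_d9]) hdecay, fun m hm hmk => ?_⟩
  exact (scaled_pow_mul_abs_iteratedDeriv_tanh_le hm hmk hN hL0).trans hdecay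

/-- **Lemma A.5.** For `k, N ≥ 1`, `ε > 0` and `R > 0` such that `|tanh^{(m)}|` is
monotonically decreasing on `[R, ∞)` for every `1 ≤ m ≤ k`, the choice
`α = N · max{R, ln((2k)^{k+1} (Nk)^k / (e^k ε))}` satisfies `α/N ≥ R`,
`1 - tanh(α/N) ≤ ε` and `α^m |tanh^{(m)}(α/N)| ≤ ε` for all `1 ≤ m ≤ k`. -/
theorem tanh_partition_alpha_choice (k N : ℕ) (hk : 1 ≤ k) (hN : 1 ≤ N)
    (ε R : ℝ) (hε : 0 < ε) (hR : 0 < R)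
    (hdec : ∀ m : ℕ, 1 ≤ m → m ≤ k →
      AntitoneOn (fun x : ℝ => |iteratedDeriv m Real.tanh x|) (Set.Ici R)) :
    R ≤ ((N : ℝ) * max R (Real.log ((2 * (k : ℝ)) ^ (k + 1) * ((N : ℝ) * k) ^ k /
        (Real.exp k * ε)))) / N ∧
    1 - Real.tanh (((N : ℝ) * max R (Real.log ((2 * (k : ℝ)) ^ (k + 1) * ((N : ℝ) * k) ^ k /
        (Real.exp k * ε)))) / N) ≤ ε ∧
    ∀ m : ℕ, 1 ≤ m → m ≤ k →
      ((N : ℝ) * max R (Real.log ((2 * (k : ℝ)) ^ (k + 1) * ((N : ℝ) * k) ^ k /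
          (Real.exp k * ε)))) ^ m *
        |iteratedDeriv m Real.tanh
          (((N : ℝ) * max R (Real.log ((2 * (k : ℝ)) ^ (k + 1) * ((N : ℝ) * k) ^ k /
            (Real.exp k * ε)))) / N)| ≤ ε :=
  tanh_partition_alpha_choice_general k N hk hN ε R hε hR
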